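/- Let Q be a finite quiver, let D = dA with d ≥ 2 and A ≥ 1, and let ρ be a set of paths of Q satisfying the (D,A)-overlap property. Let c = a_1⋯a_A be a closed path of length A with arrows a_i, and for 1 ≤ j ≤ A let c_j = a_j⋯a_Aa_1⋯a_{j-1} denote its rotations. If c_j^d ∈ ρ and c_k^d ∈ ρ for some 1 ≤ j, k ≤ A, then j = k; that is, at most one rotation of c has its d-th power in ρ. -/
import Mathlib


open Quiver

universe u v

variable {V : Type u} [Quiver.{v + 1} V]

/-- The type of paths of a quiver, bundled with their endpoints. -/
abbrev SPath (V : Type u) [Quiver.{v + 1} V] := Σ a b : V, Quiver.Path a b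

/-- The type of arrows of a quiver, bundled with their endpoints. -/
abbrev SArrow (V : Type u) [Quiver.{v + 1} V] := Σ a b : V, a ⟶ b

/-- A set of paths in a quiver, given as a predicate on paths with arbitrary endpoints. -/
abbrev PathSet (V : Type u) [Quiver.{v + 1} V] := ∀ ⦃a b : V⦄, Quiver.Path a b → Prop

/-- `p` is a prefix of `q`. -/
def IsPrefixP {a b c : V} (p : Quiver.Path a b) (q : Quiver.Path a c) : Prop :=
  ∃ p' : Quiver.Path b c, q = p.comp p'

/-- `p` is a suffix of `q`. -/
def IsSuffixP {a b c : V} (p : Quiver.Path b c) (q : Quiver.Path a c) : Prop :=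
  ∃ p' : Quiver.Path a b, q = p'.comp p

/-- `p` is a subpath of `q`. -/
def IsSubpathP {b c a e : V} (p : Quiver.Path b c) (q : Quiver.Path a e) : Prop :=
  ∃ (u : Quiver.Path a b) (v : Quiver.Path c e), q = (u.comp p).comp v

/-- `q` overlaps `p` with overlap `p.comp u`: there are paths `u`, `v` with
`pu = vq` and `1 ≤ ℓ(u) < ℓ(q)`. -/
def OverlapsWith {x y a b : V} (q : Quiver.Path x y) (p : Quiver.Path a b)
    (u : Quiver.Path b y) : Prop :=
  ∃ v : Quiver.Path a x, p.comp u = v.comp q ∧ 1 ≤ u.length ∧ u.length < q.length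

/-- `q` properly overlaps `p` with overlap `p.comp u`: additionally `ℓ(v) ≥ 1`. -/
def ProperlyOverlapsWith {x y a b : V} (q : Quiver.Path x y) (p : Quiver.Path a b)
    (u : Quiver.Path b y) : Prop :=
  ∃ v : Quiver.Path a x, p.comp u = v.comp q ∧ 1 ≤ u.length ∧ u.length < q.length ∧
    1 ≤ v.length

/-- `q` properly overlaps `p` (with some overlap). -/
def ProperlyOverlaps {x y a b : V} (q : Quiver.Path x y) (p : Quiver.Path a b) : Prop :=
  ∃ u : Quiver.Path b y, ProperlyOverlapsWith q p u

/-- `ρ` is `d`-covering: whenever `pq ∈ ρ`, `qr ∈ ρ` and `ℓ(q) ≥ 1`, every subpath of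
`pqr` of length `d` lies in `ρ`. -/
def DCovering (d : ℕ) (ρ : PathSet V) : Prop :=
  ∀ ⦃a b c e : V⦄ (p : Quiver.Path a b) (q : Quiver.Path b c) (r : Quiver.Path c e),
    ρ (p.comp q) → ρ (q.comp r) → 1 ≤ q.length →
    ∀ ⦃x y : V⦄ (s : Quiver.Path x y), s.length = d →
      IsSubpathP s ((p.comp q).comp r) → ρ s

/-- The sets `R^n` of (iterated maximal) overlaps: `R^0` = trivial paths, `R^1` = arrows,
`R^2 = ρ`, and for `n ≥ 3`, `R^n` consists of the paths `R^{n-1}u` where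
`R^{n-1} = R^{n-2}p ∈ R^{n-1}`, some element of `ρ` overlaps `p` with overlap `pu`,
and no element of `ρ` overlaps `p` with overlap a proper prefix of `pu`. -/
def RSet (ρ : PathSet V) : ℕ → PathSet V
  | 0 => fun _ _ p => p.length = 0
  | 1 => fun _ _ p => p.length = 1
  | 2 => ρ
  | n + 3 => fun a e R =>
      ∃ (c : V) (Rp : Quiver.Path a c) (u : Quiver.Path c e),
        RSet ρ (n + 2) Rp ∧ R = Rp.comp u ∧
        ∃ (b : V) (Rpp : Quiver.Path a b) (p : Quiver.Path b c),
          RSet ρ (n + 1) Rpp ∧ Rp = Rpp.comp p ∧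
          (∃ (x : V) (q : Quiver.Path x e), ρ q ∧ OverlapsWith q p u) ∧
          ∀ (x y : V) (q : Quiver.Path x y) (u' : Quiver.Path c y),
            ρ q → OverlapsWith q p u' →
            ¬(IsPrefixP (p.comp u') (p.comp u) ∧ u'.length < u.length)

/-- `δ(n) = (n/2)d` if `n` is even, `((n-1)/2)d + 1` if `n` is odd. -/
def deltaF (d n : ℕ) : ℕ := if n % 2 = 0 then n / 2 * d else (n - 1) / 2 * d + 1

/-- The `m`-th power of a closed path. -/
def cpow {a : V} (T : Quiver.Path a a) : ℕ → Quiver.Path a a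
  | 0 => Quiver.Path.nil
  | n + 1 => (cpow T n).comp T

/-- The list of arrows of a path, in order. -/
def arrowList {a : V} : ∀ {b : V}, Quiver.Path a b → List (SArrow V)
  | _, Quiver.Path.nil => []
  | _, Quiver.Path.cons p e => arrowList p ++ [⟨_, _, e⟩]

/-- A closed trail: a nontrivial closed path with pairwise distinct arrows. -/
def IsClosedTrail {a : V} (T : Quiver.Path a a) : Prop :=
  1 ≤ T.length ∧ (arrowList T).Nodup

/-- `q` lies on the closed path `T`: `q` is a subpath of `T^m` for some `m ≥ 1`. -/
def LiesOn {x y a : V} (q : Quiver.Path x y) (T : Quiver.Path a a) : Prop :=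
  ∃ m : ℕ, 1 ≤ m ∧ IsSubpathP q (cpow T m)

/-- `ρ_T ⊆ ρ`: every path of length `d` lying on `T` belongs to `ρ`. -/
def RhoTSub (d : ℕ) (ρ : PathSet V) {a : V} (T : Quiver.Path a a) : Prop :=
  ∀ ⦃x y : V⦄ (q : Quiver.Path x y), q.length = d → LiesOn q T → ρ q

/-- `SegChain A L a b p` : the path `p` decomposes as the composite of the listed
segments, each of length `A`. -/
inductive SegChain (A : ℕ) : List (SPath V) → (a b : V) → Quiver.Path a b → Prop
  | nil (a : V) : SegChain A [] a a Quiver.Path.nil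
  | cons {a b c : V} (α : Quiver.Path a b) (hα : α.length = A) {p : Quiver.Path b c}
      {L : List (SPath V)} (hp : SegChain A L b c p) :
      SegChain A (⟨a, b, α⟩ :: L) a c (α.comp p)

/-- An `A`-path: a path which decomposes into segments of length `A`. -/
def IsAPath (A : ℕ) {a b : V} (p : Quiver.Path a b) : Prop :=
  ∃ L : List (SPath V), SegChain A L a b p

/-- `p` is an `A`-subpath of `q`: a subpath which is an `A`-path starting at a position
that is a multiple of `A`. -/
def IsASubpath (A : ℕ) {b c a e : V} (p : Quiver.Path b c) (q : Quiver.Path a e) : Prop :=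
  ∃ (u : Quiver.Path a b) (v : Quiver.Path c e),
    q = (u.comp p).comp v ∧ A ∣ u.length ∧ IsAPath A p

/-- A closed `A`-trail: a nontrivial closed `A`-path with pairwise distinct `A`-segments. -/
def IsClosedATrail (A : ℕ) {a : V} (T : Quiver.Path a a) : Prop :=
  ∃ L : List (SPath V), SegChain A L a a T ∧ L ≠ [] ∧ L.Nodup

/-- The `A`-path `q` lies on the closed `A`-path `T`: `q` is an `A`-subpath of `T^m` for
some `m ≥ 1`. -/
def ALiesOn (A : ℕ) {x y a : V} (q : Quiver.Path x y) (T : Quiver.Path a a) : Prop :=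
  ∃ m : ℕ, 1 ≤ m ∧ IsASubpath A q (cpow T m)

/-- `ρ_T ⊆ ρ` in the `(D,A)`-setting: every path of length `D` which lies on `T` as an
`A`-path belongs to `ρ`. -/
def ARhoTSub (D A : ℕ) (ρ : PathSet V) {a : V} (T : Quiver.Path a a) : Prop :=
  ∀ ⦃x y : V⦄ (q : Quiver.Path x y), q.length = D → ALiesOn A q T → ρ q

/-- The `(D,A)`-overlap property: every path in `ρ` has length `D`, and whenever
`R₂ ∈ ρ` properly overlaps `R₁ ∈ ρ` with overlap `R₁u`, then `ℓ(u) ≥ A` and some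
`R₃ ∈ ρ` properly overlaps `R₁` with overlap `R₁u'` where `ℓ(u') = A` and `u'` is a
prefix of `u`. -/
def DAOverlapProperty (D A : ℕ) (ρ : PathSet V) : Prop :=
  (∀ ⦃a b : V⦄ (p : Quiver.Path a b), ρ p → p.length = D) ∧
  ∀ ⦃a b x y : V⦄ (R₁ : Quiver.Path a b) (R₂ : Quiver.Path x y) (u : Quiver.Path b y),
    ρ R₁ → ρ R₂ → ProperlyOverlapsWith R₂ R₁ u →
    A ≤ u.length ∧
      ∃ (y' : V) (x' : V) (R₃ : Quiver.Path x' y') (u' : Quiver.Path b y'),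
        ρ R₃ ∧ ProperlyOverlapsWith R₃ R₁ u' ∧ u'.length = A ∧ IsPrefixP u' u

/-- Condition (C1), part (1), for a loop `α`. -/
def CondLoop (d : ℕ) (ρ : PathSet V) {v : V} (α : v ⟶ v) : Prop :=
  ρ (cpow (Quiver.Hom.toPath α) d) ∧
  (∀ ⦃w : V⦄ (β : v ⟶ w), (⟨v, w, β⟩ : SArrow V) ≠ ⟨v, v, α⟩ →
      ¬ ρ ((cpow (Quiver.Hom.toPath α) (d - 1)).comp (Quiver.Hom.toPath β))) ∧
  (∀ ⦃w : V⦄ (β : w ⟶ v), (⟨w, v, β⟩ : SArrow V) ≠ ⟨v, v, α⟩ →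
      ¬ ρ ((Quiver.Hom.toPath β).comp (cpow (Quiver.Hom.toPath α) (d - 1))))

/-- Condition (C1): (1) every loop `α` satisfies `α^d ∈ ρ` and no element of `ρ` has the
form `α^{d-1}β` or `βα^{d-1}` with `β` an arrow distinct from `α`; (2) for every closed
trail `T` with `ℓ(T) > 1` and `ρ_T ⊆ ρ`, no element of `ρ∖ρ_T` begins or ends with an
arrow of `T`. -/
def CondC1 (d : ℕ) (ρ : PathSet V) : Prop :=
  (∀ (v : V) (α : v ⟶ v), CondLoop d ρ α) ∧
  (∀ ⦃a : V⦄ (T : Quiver.Path a a), IsClosedTrail T → 1 < T.length → RhoTSub d ρ T →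
    ∀ ⦃x y : V⦄ (q : Quiver.Path x y), ρ q → ¬(q.length = d ∧ LiesOn q T) →
      (∀ ⦃w : V⦄ (e : x ⟶ w) (q' : Quiver.Path w y),
          q = (Quiver.Hom.toPath e).comp q' → (⟨x, w, e⟩ : SArrow V) ∉ arrowList T) ∧
      (∀ ⦃w : V⦄ (e : w ⟶ y) (q' : Quiver.Path x w),
          q = q'.comp (Quiver.Hom.toPath e) → (⟨w, y, e⟩ : SArrow V) ∉ arrowList T))

/-- Condition (C2): (1) for every `A`-loop `c`, some rotation `c'` of `c` satisfies
`c'^d ∈ ρ` and no element of `ρ` has the form `c'^{d-1}β` or `βc'^{d-1}` with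
`β` a path of length `A` distinct from `c'`; (2) for every closed `A`-trail `T` with at
least two segments and `ρ_T ⊆ ρ`, no element of `ρ∖ρ_T` begins or ends with an
`A`-segment of `T`. -/
def CondC2 (D A d : ℕ) (ρ : PathSet V) : Prop :=
  (∀ ⦃v : V⦄ (c : Quiver.Path v v), c.length = A →
    ∃ (w : V) (p : Quiver.Path v w) (q : Quiver.Path w v), c = p.comp q ∧ p.length < A ∧
      ρ (cpow (q.comp p) d) ∧
      (∀ ⦃x : V⦄ (β : Quiver.Path w x), β.length = A →
          (⟨w, x, β⟩ : SPath V) ≠ ⟨w, w, q.comp p⟩ →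
          ¬ ρ ((cpow (q.comp p) (d - 1)).comp β)) ∧
      (∀ ⦃x : V⦄ (β : Quiver.Path x w), β.length = A →
          (⟨x, w, β⟩ : SPath V) ≠ ⟨w, w, q.comp p⟩ →
          ¬ ρ (β.comp (cpow (q.comp p) (d - 1))))) ∧
  (∀ ⦃a : V⦄ (T : Quiver.Path a a) (L : List (SPath V)),
      SegChain A L a a T → L.Nodup → 2 ≤ L.length → ARhoTSub D A ρ T →
      ∀ ⦃x y : V⦄ (q : Quiver.Path x y), ρ q → ¬(q.length = D ∧ ALiesOn A q T) →
        (∀ ⦃w : V⦄ (α : Quiver.Path x w) (q' : Quiver.Path w y),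
            q = α.comp q' → (⟨x, w, α⟩ : SPath V) ∉ L) ∧
        (∀ ⦃w : V⦄ (α : Quiver.Path w y) (q' : Quiver.Path x w),
            q = q'.comp α → (⟨w, y, α⟩ : SPath V) ∉ L))

theorem comp_split' {a c : V} {b' : V} (q' : Quiver.Path b' c) :
    ∀ {b : V} (q : Quiver.Path b c) (p : Quiver.Path a b) (p' : Quiver.Path a b'),
    p.comp q = p'.comp q' → q'.length ≤ q.length →
    ∃ s : Quiver.Path b b', q = s.comp q' ∧ p' = p.comp s := by
  induction q' with
  | nil => intro b q p p' h _; exact ⟨q, by simp, by simpa using h.symm⟩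
  | cons q'' e ih =>
    intro b q p p' h hle
    cases q with
    | nil => simp [Quiver.Path.length] at hle
    | cons q₀ f =>
      simp only [Quiver.Path.comp_cons] at h
      obtain rfl := Quiver.Path.obj_eq_of_cons_eq_cons h
      obtain rfl := eq_of_heq (Quiver.Path.hom_heq_of_cons_eq_cons h)
      obtain ⟨s, hs1, hs2⟩ := ih q₀ p p' (eq_of_heq (Quiver.Path.heq_of_cons_eq_cons h))
        (by simpa [Quiver.Path.length] using hle)
      exact ⟨s, by rw [hs1]; rfl, hs2⟩

theorem cpow_length' {a : V} (T : Quiver.Path a a) : ∀ n, (cpow T n).length = n * T.length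
  | 0 => by simp [cpow]
  | n + 1 => by
    simp [cpow, Quiver.Path.length_comp, cpow_length' T n, Nat.succ_mul]

theorem cpow_comm' {a b : V} (r₁ : Quiver.Path a a) (r₂ : Quiver.Path b b)
    (s : Quiver.Path a b) (h : r₁.comp s = s.comp r₂) :
    ∀ n, (cpow r₁ n).comp s = s.comp (cpow r₂ n)
  | 0 => by simp [cpow]
  | n + 1 => by
    simp only [cpow]
    rw [Quiver.Path.comp_assoc, h, ← Quiver.Path.comp_assoc,
      cpow_comm' r₁ r₂ s h n, Quiver.Path.comp_assoc]

theorem stmt_13_aux {V : Type u} [Quiver.{v + 1} V]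
    (D A d : ℕ) (hd : 2 ≤ d) (hA : 1 ≤ A) (hD : D = d * A)
    (ρ : PathSet V) (hDA : DAOverlapProperty D A ρ)
    {u : V} (c : Quiver.Path u u) (hc : c.length = A)
    {w₁ w₂ : V} (p₁ : Quiver.Path u w₁) (q₁ : Quiver.Path w₁ u)
    (p₂ : Quiver.Path u w₂) (q₂ : Quiver.Path w₂ u)
    (hc₁ : c = p₁.comp q₁) (hc₂ : c = p₂.comp q₂)
    (hp₂ : p₂.length < A)
    (hρ₁ : ρ (cpow (q₁.comp p₁) d)) (hρ₂ : ρ (cpow (q₂.comp p₂) d))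
    (hlt : p₁.length < p₂.length) : False := by
  have hl₁ : p₁.length + q₁.length = A := by
    rw [← Quiver.Path.length_comp, ← hc₁, hc]
  have hl₂ : p₂.length + q₂.length = A := by
    rw [← Quiver.Path.length_comp, ← hc₂, hc]
  obtain ⟨s, hq₁, hp₂eq⟩ := comp_split' q₂ q₁ p₁ p₂ (hc₁.symm.trans hc₂) (by omega)
  have hslen : p₂.length = p₁.length + s.length := by
    rw [hp₂eq, Quiver.Path.length_comp]
  have hs1 : 1 ≤ s.length := by omega
  have hsA : s.length < A := by omega
  have hcomm : (q₁.comp p₁).comp s = s.comp (q₂.comp p₂) := by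
    rw [hq₁, hp₂eq]
    simp [Quiver.Path.comp_assoc]
  have hr₂len : (cpow (q₂.comp p₂) d).length = d * A := by
    rw [cpow_length', Quiver.Path.length_comp, Nat.add_comm q₂.length p₂.length, hl₂]
  have hPO : ProperlyOverlapsWith (cpow (q₂.comp p₂) d) (cpow (q₁.comp p₁) d) s := by
    refine ⟨s, cpow_comm' _ _ s hcomm d, hs1, ?_, hs1⟩
    rw [hr₂len]
    calc s.length < A := hsA
      _ ≤ d * A := Nat.le_mul_of_pos_left A (by omega)
  have := (hDA.2 _ _ s hρ₁ hρ₂ hPO).1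
  omega

/-- at most one rotation of a closed path `c` of length `A` has its `d`-th
power in `ρ`; rotations are encoded by decompositions `c = p ⬝ q` with `ℓ(p) < A`, the
corresponding rotation being `q ⬝ p`, and equality of indices meaning `ℓ(p₁) = ℓ(p₂)`. -/
theorem stmt_13 {V : Type u} [Quiver.{v + 1} V] [Fintype V] [∀ a b : V, Fintype (a ⟶ b)]
    (D A d : ℕ) (hd : 2 ≤ d) (hA : 1 ≤ A) (hD : D = d * A)
    (ρ : PathSet V) (hDA : DAOverlapProperty D A ρ)
    {u : V} (c : Quiver.Path u u) (hc : c.length = A)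
    {w₁ w₂ : V} (p₁ : Quiver.Path u w₁) (q₁ : Quiver.Path w₁ u)
    (p₂ : Quiver.Path u w₂) (q₂ : Quiver.Path w₂ u)
    (hc₁ : c = p₁.comp q₁) (hc₂ : c = p₂.comp q₂)
    (hp₁ : p₁.length < A) (hp₂ : p₂.length < A)
    (hρ₁ : ρ (cpow (q₁.comp p₁) d)) (hρ₂ : ρ (cpow (q₂.comp p₂) d)) :
    p₁.length = p₂.length := by
  rcases lt_trichotomy p₁.length p₂.length with h | h | h
  · exact absurd h (fun h =>
      stmt_13_aux D A d hd hA hD ρ hDA c hc p₁ q₁ p₂ q₂ hc₁ hc₂ hp₂ hρ₁ hρ₂ h)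
  · exact h
  · exact absurd h (fun h =>
      stmt_13_aux D A d hd hA hD ρ hDA c hc p₂ q₂ p₁ q₁ hc₂ hc₁ hp₁ hρ₂ hρ₁ h)
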